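/- Fix q₀ ∈ Proj*(H) and a norm-continuous map g: Proj*(H) → U(H) such that q = g(q) q₀ g(q)* for every q ∈ Proj*(H). Let T₀ be the group of unitaries of H commuting with q₀, equipped with the strong operator topology, and let T be the set U(H) with the topology induced by the injection u ↦ (u, u q₀ u*) into sU(H) × Proj*(H) (Proj*(H) with the norm topology). Then the map T₀ × Proj*(H) → T, (v, q) ↦ g(q)·v, is a homeomorphism. -/

import Mathlib

/-! The inverse of `(v, q) ↦ g(q) v` is `u ↦ (g(q)⁎ u, q)` with `q = u q₀ u⁎`; here `g(q)⁎ u`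
commutes with `q₀` because `g(q)` and `u` both conjugate `q₀` to `q`. Both maps are continuous:
a norm-continuous family times a strongly continuous family of operators is strongly continuous,
the topology of `T` makes `u ↦ u q₀ u⁎` continuous by design, and on `g(q) v` this map is `q`. -/

open scoped InnerProductSpace Classical
noncomputable section

namespace Paper

variable {H : Type*} [NormedAddCommGroup H] [InnerProductSpace ℂ H] [CompleteSpace H]

/-- An orthogonal projection of infinite rank and infinite corank (a polarization). -/
def IsProjInfInf (p : H →L[ℂ] H) : Prop :=
  IsIdempotentElem p ∧ IsSelfAdjoint p ∧
  ¬ FiniteDimensional ℂ (LinearMap.range (p : H →ₗ[ℂ] H)) ∧ ¬ FiniteDimensional ℂ (LinearMap.ker (p : H →ₗ[ℂ] H))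

/-- `Proj*(H)`: the projections of infinite rank and corank, with the norm topology. -/
def ProjStar (H : Type*) [NormedAddCommGroup H] [InnerProductSpace ℂ H] [CompleteSpace H] :
    Type _ := {p : H →L[ℂ] H // IsProjInfInf p}

instance : TopologicalSpace (ProjStar H) := instTopologicalSpaceSubtype

/-- The space `T`: the unitary group of `H` with the topology induced by the injection
`u ↦ (u, u q₀ u⁎)` into `sU(H) × Proj*(H)` (strong operator topology on the first factor,
norm topology on the second). -/
def Tspace (q₀ : H →L[ℂ] H) : Type _ := unitary (H →L[ℂ] H)

instance (q₀ : H →L[ℂ] H) : TopologicalSpace (Tspace q₀) :=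
  TopologicalSpace.induced
    (fun u : unitary (H →L[ℂ] H) =>
      ((⇑(u : H →L[ℂ] H) : H → H),
        ((u : H →L[ℂ] H) * q₀ * star (u : H →L[ℂ] H) : H →L[ℂ] H)))
    inferInstance

/-- Pack a unitary as an element of `Tspace q₀`. -/
def Tspace.of (q₀ : H →L[ℂ] H) (u : H →L[ℂ] H) (h : u ∈ unitary (H →L[ℂ] H)) :
    Tspace q₀ := ⟨u, h⟩

/-- `T₀`: the subgroup of unitaries commuting with `q₀`, with the strong operator topology. -/
def T0 (q₀ : H →L[ℂ] H) : Type _ :=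
  {v : unitary (H →L[ℂ] H) // (v : H →L[ℂ] H) * q₀ = q₀ * (v : H →L[ℂ] H)}

instance (q₀ : H →L[ℂ] H) : TopologicalSpace (T0 q₀) :=
  TopologicalSpace.induced
    (fun v : {v : unitary (H →L[ℂ] H) // (v : H →L[ℂ] H) * q₀ = q₀ * (v : H →L[ℂ] H)} =>
      (⇑((v.1 : unitary (H →L[ℂ] H)) : H →L[ℂ] H) : H → H))
    Pi.topologicalSpace

theorem Submodule.finite_map_linearEquiv_iff {R M N : Type*} [Semiring R] [AddCommMonoid M]
    [Module R M] [AddCommMonoid N] [Module R N] (e : M ≃ₗ[R] N) (S : Submodule R M) :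
    Module.Finite R (S.map (e : M →ₗ[R] N)) ↔ Module.Finite R S :=
  (Module.Finite.equiv_iff (e.submoduleMap S)).symm

section Conjugation

variable {R M N : Type*} [CommSemiring R] [AddCommMonoid M] [Module R M] [AddCommMonoid N]
  [Module R N]

theorem range_linearEquiv_conj (e : M ≃ₗ[R] N) (f : Module.End R M) :
    LinearMap.range (e.conj f) = (LinearMap.range f).map (e : M →ₗ[R] N) := by
  rw [LinearEquiv.conj_apply, LinearMap.range_comp_of_range_eq_top _ e.symm.range,
    LinearMap.range_comp]

theorem ker_linearEquiv_conj (e : M ≃ₗ[R] N) (f : Module.End R M) :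
    LinearMap.ker (e.conj f) = (LinearMap.ker f).map (e : M →ₗ[R] N) := by
  rw [LinearEquiv.conj_apply, LinearMap.ker_comp, LinearEquiv.ker_comp,
    Submodule.comap_equiv_eq_map_symm, LinearEquiv.symm_symm]

end Conjugation

section UnitaryConj

variable {A : Type*} [Monoid A] [StarMul A]

theorem mul_conj_of_commute_unitary (u : A) {v q : A} (hv : v ∈ unitary A) (h : Commute v q) :
    u * v * q * star (u * v) = u * q * star u := by
  calc u * v * q * star (u * v) = u * (v * q * star v) * star u := by
        simp only [star_mul, mul_assoc]
    _ = u * q * star u := by rw [(commute_unitary_iff_star_right_conjugate hv).1 h]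

theorem commute_star_mul_of_conj_eq {u v q : A} (hu : u ∈ unitary A) (hv : v ∈ unitary A)
    (h : u * q * star u = v * q * star v) : Commute (star u * v) q := by
  rw [commute_unitary_iff_star_right_conjugate (mul_mem (Unitary.star_mem hu) hv)]
  calc star u * v * q * star (star u * v) = star u * (v * q * star v) * u := by
        simp only [star_mul, star_star, mul_assoc]
    _ = q := by
        rw [← h]
        simp only [← mul_assoc, Unitary.star_mul_self_of_mem hu, one_mul]
        simp only [mul_assoc, Unitary.star_mul_self_of_mem hu, mul_one]

end UnitaryConj

theorem toLinearMap_unitary_conj (u : unitary (H →L[ℂ] H)) (p : H →L[ℂ] H) :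
    (((u : H →L[ℂ] H) * p * star (u : H →L[ℂ] H) : H →L[ℂ] H) : H →ₗ[ℂ] H) =
      (Unitary.linearIsometryEquiv u).toLinearEquiv.conj (p : H →ₗ[ℂ] H) := by
  ext x
  rfl

theorem IsProjInfInf.unitary_conj {p : H →L[ℂ] H} (hp : IsProjInfInf p)
    (u : unitary (H →L[ℂ] H)) :
    IsProjInfInf ((u : H →L[ℂ] H) * p * star (u : H →L[ℂ] H)) := by
  obtain ⟨hidem, hsa, hrange, hker⟩ := hp
  refine ⟨hidem.map (Unitary.conjStarAlgAut ℂ _ u), hsa.map (Unitary.conjStarAlgAut ℂ _ u),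
    ?_, ?_⟩
  · rw [toLinearMap_unitary_conj, range_linearEquiv_conj]
    exact mt (Submodule.finite_map_linearEquiv_iff _ _).1 hrange
  · rw [toLinearMap_unitary_conj, ker_linearEquiv_conj]
    exact mt (Submodule.finite_map_linearEquiv_iff _ _).1 hker

theorem continuous_coeFn_mul {X 𝕜 E : Type*} [TopologicalSpace X] [NontriviallyNormedField 𝕜]
    [NormedAddCommGroup E] [NormedSpace 𝕜 E] {f g : X → E →L[𝕜] E} (hf : Continuous f)
    (hg : Continuous fun x => ⇑(g x)) : Continuous fun x => ⇑(f x * g x) :=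
  continuous_pi fun v => hf.clm_apply ((continuous_apply v).comp hg)

variable {q₀ : H →L[ℂ] H}

theorem T0.continuous_coeFn :
    Continuous fun v : T0 q₀ => ⇑((v.1 : unitary (H →L[ℂ] H)) : H →L[ℂ] H) :=
  continuous_induced_dom

abbrev Tspace.toUnitary (u : Tspace q₀) : unitary (H →L[ℂ] H) := u


def Tspace.proj (hq₀ : IsProjInfInf q₀) (u : Tspace q₀) : ProjStar H :=
  ⟨u.toUnitary * q₀ * star (u.toUnitary : H →L[ℂ] H), hq₀.unitary_conj u⟩

theorem Tspace.continuous_iff (hq₀ : IsProjInfInf q₀) {X : Type*} [TopologicalSpace X]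
    {f : X → Tspace q₀} :
    Continuous f ↔ Continuous (fun x => ⇑((f x).toUnitary : H →L[ℂ] H)) ∧
      Continuous (Tspace.proj hq₀ ∘ f) := by
  rw [continuous_induced_rng, continuous_prodMk]
  exact Iff.and Iff.rfl
    (Topology.IsInducing.subtypeVal.continuous_iff (f := Tspace.proj hq₀ ∘ f)).symm

theorem Tspace.continuous_proj (hq₀ : IsProjInfInf q₀) : Continuous (Tspace.proj hq₀) :=
  ((Tspace.continuous_iff hq₀).1 continuous_id).2

theorem Tspace.proj_mul_eq (hq₀ : IsProjInfInf q₀) {u : unitary (H →L[ℂ] H)} {q : ProjStar H}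
    (hu : (u : H →L[ℂ] H) * q₀ * star (u : H →L[ℂ] H) = q.1) (v : T0 q₀) :
    Tspace.proj hq₀ (u * v.1) = q :=
  Subtype.ext ((mul_conj_of_commute_unitary _ v.1.2 v.2).trans hu)

def homeomorphOfSection (hq₀ : IsProjInfInf q₀) (σ : ProjStar H → unitary (H →L[ℂ] H))
    (hσC : Continuous fun q => (σ q : H →L[ℂ] H))
    (hσ : ∀ q, (σ q : H →L[ℂ] H) * q₀ * star (σ q : H →L[ℂ] H) = q.1) :
    T0 q₀ × ProjStar H ≃ₜ Tspace q₀ where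
  toFun z := σ z.2 * z.1.1
  invFun u :=
    (⟨star (σ (Tspace.proj hq₀ u)) * u.toUnitary,
      commute_star_mul_of_conj_eq (σ _).2 u.toUnitary.2 (hσ _)⟩, Tspace.proj hq₀ u)
  left_inv z := by
    have hproj := Tspace.proj_mul_eq hq₀ (hσ z.2) z.1
    ext : 1
    · apply Subtype.ext
      change star (σ (Tspace.proj hq₀ (σ z.2 * z.1.1))) * (σ z.2 * z.1.1) = z.1.1
      rw [hproj, ← mul_assoc, Unitary.star_mul_self, one_mul]
    · exact hproj
  right_inv u := by
    change σ _ * (star (σ _) * u.toUnitary) = u.toUnitary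
    rw [← mul_assoc, Unitary.mul_star_self, one_mul]
  continuous_toFun := by
    refine (Tspace.continuous_iff hq₀).2 ⟨?_, ?_⟩
    · exact continuous_coeFn_mul (hσC.comp continuous_snd)
        (T0.continuous_coeFn.comp continuous_fst)
    · exact continuous_snd.congr fun z => (Tspace.proj_mul_eq hq₀ (hσ z.2) z.1).symm
  continuous_invFun := by
    refine .prodMk (continuous_induced_rng.2 ?_) (Tspace.continuous_proj hq₀)
    exact continuous_coeFn_mul (continuous_star.comp (hσC.comp (Tspace.continuous_proj hq₀)))
      ((Tspace.continuous_iff hq₀).1 continuous_id).1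

theorem statement13_general (q₀ : H →L[ℂ] H) (hq₀ : IsProjInfInf q₀)
    (g : ProjStar H → (H →L[ℂ] H))
    (hgU : ∀ q, g q ∈ unitary (H →L[ℂ] H))
    (hgC : Continuous g)
    (hgP : ∀ q : ProjStar H, g q * q₀ * star (g q) = q.1) :
    ∃ hmem : ∀ (v : T0 q₀) (q : ProjStar H),
        g q * ((v.1 : unitary (H →L[ℂ] H)) : H →L[ℂ] H) ∈ unitary (H →L[ℂ] H),
      IsHomeomorph (fun z : T0 q₀ × ProjStar H =>
        Tspace.of q₀ (g z.2 * ((z.1.1 : unitary (H →L[ℂ] H)) : H →L[ℂ] H))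
          (hmem z.1 z.2)) :=
  ⟨fun v q => mul_mem (hgU q) v.1.2,
    (homeomorphOfSection hq₀ (fun q => ⟨g q, hgU q⟩) hgC hgP).isHomeomorph⟩

theorem statement13 (q₀ : H →L[ℂ] H) (hq₀ : IsProjInfInf q₀)
    [TopologicalSpace.SeparableSpace H] (hdimH : ¬ FiniteDimensional ℂ H)
    (g : ProjStar H → (H →L[ℂ] H))
    (hgU : ∀ q, g q ∈ unitary (H →L[ℂ] H))
    (hgC : Continuous g)
    (hgP : ∀ q : ProjStar H, g q * q₀ * star (g q) = q.1) :
    ∃ hmem : ∀ (v : T0 q₀) (q : ProjStar H),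
        g q * ((v.1 : unitary (H →L[ℂ] H)) : H →L[ℂ] H) ∈ unitary (H →L[ℂ] H),
      IsHomeomorph (fun z : T0 q₀ × ProjStar H =>
        Tspace.of q₀ (g z.2 * ((z.1.1 : unitary (H →L[ℂ] H)) : H →L[ℂ] H))
          (hmem z.1 z.2)) :=
  statement13_general q₀ hq₀ g hgU hgC hgP

end Paper
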